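/- Let N ≥ 5, let R > 0, let Ω ⊆ ℝᴺ be an open set contained in the ball of radius R centered at the origin, and let 0 ≤ α < ᾱ := N(N−4)/4. Then there exists a constant γ > 0 such that for every smooth function u : ℝᴺ → ℝ with compact support contained in Ω, ∫_Ω (|Δu(x)|² − α²|x|⁻⁴ u(x)²) dx ≥ γ · ∫_Ω u(x)² dx. -/

import Mathlib

open MeasureTheory

/-- The Laplacian `Δu = Σ_{i=1}^N ∂²u/∂x_i²` of a function `u : ℝᴺ → ℝ`. -/
noncomputable def laplacian {N : ℕ} (u : EuclideanSpace ℝ (Fin N) → ℝ)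
    (x : EuclideanSpace ℝ (Fin N)) : ℝ :=
  ∑ i : Fin N,
    fderiv ℝ (fun y => fderiv ℝ u y (EuclideanSpace.single i 1)) x (EuclideanSpace.single i 1)

section
variable {N : ℕ}
noncomputable def pd (i : Fin N) (f : EuclideanSpace ℝ (Fin N) → ℝ) (x : EuclideanSpace ℝ (Fin N)) : ℝ :=
  fderiv ℝ f x (EuclideanSpace.single i 1)

lemma contDiff_pd {f : EuclideanSpace ℝ (Fin N) → ℝ} (hf : ContDiff ℝ (⊤ : ℕ∞) f) (i : Fin N) :
    ContDiff ℝ (⊤ : ℕ∞) (pd i f) :=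
  (hf.fderiv_right (by simp)).clm_apply contDiff_const

lemma support_pd (f : EuclideanSpace ℝ (Fin N) → ℝ) (i : Fin N) :
    Function.support (pd i f) ⊆ tsupport f := by
  intro x hx
  by_contra h
  apply hx
  have hev : f =ᶠ[nhds x] 0 := by
    filter_upwards [(isClosed_tsupport f).isOpen_compl.mem_nhds h] with y hy
    exact image_eq_zero_of_notMem_tsupport hy
  have h0 : fderiv ℝ f x = fderiv ℝ (fun _ => (0:ℝ)) x := hev.fderiv_eq
  simp [pd, h0, fderiv_const]

lemma tsupport_pd (f : EuclideanSpace ℝ (Fin N) → ℝ) (i : Fin N) :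
    tsupport (pd i f) ⊆ tsupport f :=
  closure_minimal (support_pd f i) (isClosed_tsupport f)

lemma integrable_aux {u : EuclideanSpace ℝ (Fin N) → ℝ} (hu : HasCompactSupport u)
    {f : EuclideanSpace ℝ (Fin N) → ℝ} (hf : Continuous f)
    (h : Function.support f ⊆ tsupport u) : Integrable f :=
  hf.integrable_of_hasCompactSupport (hu.mono' h)

lemma integral_pd_eq_zero {f : EuclideanSpace ℝ (Fin N) → ℝ} (hf : ContDiff ℝ (⊤ : ℕ∞) f)
    (hc : HasCompactSupport f) (i : Fin N) : ∫ x, pd i f x = 0 := by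
  have h1 : Integrable (fun x => pd i f x * (1:ℝ)) := by
    simpa using integrable_aux hc ((contDiff_pd hf i).continuous) (support_pd f i)
  have h2 : Integrable (fun x : EuclideanSpace ℝ (Fin N) =>
      f x * fderiv ℝ (fun _ => (1:ℝ)) x (EuclideanSpace.single i 1)) := by
    simpa [fderiv_fun_const] using (integrable_zero _ ℝ (volume : Measure (EuclideanSpace ℝ (Fin N))))
  have h3 : Integrable (fun x => f x * (1:ℝ)) := by
    simpa using integrable_aux hc hf.continuous subset_closure
  have key := integral_mul_fderiv_eq_neg_fderiv_mul_of_integrable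
    (f := f) (g := fun _ => (1:ℝ)) (v := EuclideanSpace.single i 1)
    h1 h2 h3 (fun x _ => hf.differentiable (by simp) x) (fun x _ => differentiableAt_const _)
  simp only [fderiv_fun_const, Pi.zero_apply, ContinuousLinearMap.zero_apply, mul_zero, mul_one,
    integral_zero] at key
  simp only [pd]
  linarith [key]

lemma pd_mul {f g : EuclideanSpace ℝ (Fin N) → ℝ} {x : EuclideanSpace ℝ (Fin N)}
    (hf : DifferentiableAt ℝ f x) (hg : DifferentiableAt ℝ g x) (i : Fin N) :
    pd i (fun y => f y * g y) x = pd i f x * g x + f x * pd i g x := by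
  simp only [pd, fderiv_fun_mul hf hg, ContinuousLinearMap.add_apply, ContinuousLinearMap.smul_apply,
    smul_eq_mul]
  ring

lemma pd_coord_self (i : Fin N) (x : EuclideanSpace ℝ (Fin N)) :
    pd i (fun y => y i) x = 1 := by
  have : (fun y : EuclideanSpace ℝ (Fin N) => y i)
      = fun y => (EuclideanSpace.proj (𝕜 := ℝ) i) y := rfl
  rw [pd, this, ContinuousLinearMap.fderiv]
  simp [EuclideanSpace.proj, EuclideanSpace.single_apply]

lemma pd_normsq (i : Fin N) (x : EuclideanSpace ℝ (Fin N)) :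
    pd i (fun y => ‖y‖^2) x = 2 * x i := by
  rw [pd, (hasStrictFDerivAt_norm_sq x).hasFDerivAt.fderiv]
  simp [EuclideanSpace.inner_single_right, real_inner_comm]

lemma normsq_eq (x : EuclideanSpace ℝ (Fin N)) : ‖x‖^2 = ∑ i, (x i)^2 := by
  rw [EuclideanSpace.norm_eq, Real.sq_sqrt (by positivity)]
  simp [sq_abs]

lemma diff_normsq_add (δ : ℝ) : ContDiff ℝ (⊤ : ℕ∞) (fun y : EuclideanSpace ℝ (Fin N) => ‖y‖^2 + δ) :=
  (contDiff_norm_sq ℝ).add contDiff_const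

lemma Q_pos {δ : ℝ} (hδ : 0 < δ) (x : EuclideanSpace ℝ (Fin N)) : 0 < (‖x‖^2 + δ)⁻¹ := by
  positivity

lemma contDiff_Q {δ : ℝ} (hδ : 0 < δ) :
    ContDiff ℝ (⊤ : ℕ∞) (fun y : EuclideanSpace ℝ (Fin N) => (‖y‖^2 + δ)⁻¹) :=
  (diff_normsq_add δ).inv (fun x => by positivity)

lemma pd_Q {δ : ℝ} (hδ : 0 < δ) (i : Fin N) (x : EuclideanSpace ℝ (Fin N)) :
    pd i (fun y => (‖y‖^2 + δ)⁻¹) x = -(2 * x i) * ((‖x‖^2 + δ)⁻¹)^2 := by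
  have hs : (‖x‖^2 + δ) ≠ 0 := by positivity
  have h1 : HasFDerivAt (fun y : EuclideanSpace ℝ (Fin N) => ‖y‖^2 + δ)
      (2 • (innerSL ℝ x)) x := by
    simpa using ((hasStrictFDerivAt_norm_sq x).hasFDerivAt.add_const δ)
  have h2 : HasFDerivAt (fun y : EuclideanSpace ℝ (Fin N) => (‖y‖^2 + δ)⁻¹)
      ((-((‖x‖^2 + δ)^2)⁻¹) • (2 • (innerSL ℝ x))) x :=
    (hasDerivAt_inv hs).comp_hasFDerivAt x h1
  rw [pd, h2.fderiv]
  simp [EuclideanSpace.inner_single_right, real_inner_comm]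
  field_simp

lemma pd_add {f g : EuclideanSpace ℝ (Fin N) → ℝ} {x : EuclideanSpace ℝ (Fin N)}
    (hf : DifferentiableAt ℝ f x) (hg : DifferentiableAt ℝ g x) (i : Fin N) :
    pd i (fun y => f y + g y) x = pd i f x + pd i g x := by
  simp [pd, fderiv_fun_add hf hg]

lemma pd_zero_of {f : EuclideanSpace ℝ (Fin N) → ℝ} {x : EuclideanSpace ℝ (Fin N)}
    (h : x ∉ tsupport f) (i : Fin N) : pd i f x = 0 := by
  by_contra h'
  exact h (support_pd f i h')

lemma u_zero_of {f : EuclideanSpace ℝ (Fin N) → ℝ} {x : EuclideanSpace ℝ (Fin N)}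
    (h : x ∉ tsupport f) : f x = 0 := image_eq_zero_of_notMem_tsupport h

lemma support_helper {u f : EuclideanSpace ℝ (Fin N) → ℝ}
    (h : ∀ x, x ∉ tsupport u → f x = 0) : Function.support f ⊆ tsupport u := by
  intro x hx
  by_contra h'
  exact hx (h x h')
end

section
variable {N : ℕ}

lemma phi_deriv {u : EuclideanSpace ℝ (Fin N) → ℝ} (hu : ContDiff ℝ (⊤ : ℕ∞) u)
    {δ : ℝ} (hδ : 0 < δ) (i : Fin N) (x : EuclideanSpace ℝ (Fin N)) :
    pd i (fun y => u y * u y * (y i * ((‖y‖^2+δ)⁻¹ * (‖y‖^2+δ)⁻¹))) x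
      = (2 * u x * ((‖x‖^2+δ)⁻¹)^2) * (x i * pd i u x)
        + u x^2 * ((‖x‖^2+δ)⁻¹)^2 - (4 * u x^2 * ((‖x‖^2+δ)⁻¹)^3) * (x i)^2 := by
  have du : DifferentiableAt ℝ u x := hu.differentiable (by simp) x
  have dc : DifferentiableAt ℝ (fun y : EuclideanSpace ℝ (Fin N) => y i) x :=
    (EuclideanSpace.proj (𝕜 := ℝ) i).differentiable.differentiableAt
  have dQ : DifferentiableAt ℝ (fun y : EuclideanSpace ℝ (Fin N) => (‖y‖^2+δ)⁻¹) x :=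
    ((contDiff_Q hδ).differentiable (by simp)).differentiableAt
  rw [pd_mul (f := fun y => u y * u y)
      (g := fun y => y i * ((‖y‖^2+δ)⁻¹ * (‖y‖^2+δ)⁻¹)) (du.mul du) (dc.mul (dQ.mul dQ)) i,
    pd_mul du du, pd_mul (f := fun y : EuclideanSpace ℝ (Fin N) => y i)
      (g := fun y => (‖y‖^2+δ)⁻¹ * (‖y‖^2+δ)⁻¹) dc (dQ.mul dQ) i,
    pd_mul dQ dQ, pd_coord_self, pd_Q hδ]
  ring
end

section
variable {N : ℕ}

lemma pd_const_mul {f : EuclideanSpace ℝ (Fin N) → ℝ} {x : EuclideanSpace ℝ (Fin N)}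
    (hf : DifferentiableAt ℝ f x) (c : ℝ) (i : Fin N) :
    pd i (fun y => c * f y) x = c * pd i f x := by
  simp [pd, fderiv_const_mul hf c]

lemma psi_deriv {u : EuclideanSpace ℝ (Fin N) → ℝ} (hu : ContDiff ℝ (⊤ : ℕ∞) u)
    {δ : ℝ} (hδ : 0 < δ) (i : Fin N) (x : EuclideanSpace ℝ (Fin N)) :
    pd i (fun y => 2 * (u y * pd i u y * (‖y‖^2+δ)⁻¹)
        + 2 * (u y * u y * (y i * ((‖y‖^2+δ)⁻¹ * (‖y‖^2+δ)⁻¹)))) x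
      = 2 * (pd i u x)^2 * (‖x‖^2+δ)⁻¹ + 2 * (u x * pd i (pd i u) x) * (‖x‖^2+δ)⁻¹
        - (4 * (u x * pd i u x * (x i))) * ((‖x‖^2+δ)⁻¹)^2
        + 2 * ((2 * u x * ((‖x‖^2+δ)⁻¹)^2) * (x i * pd i u x)
            + u x^2 * ((‖x‖^2+δ)⁻¹)^2 - (4 * u x^2 * ((‖x‖^2+δ)⁻¹)^3) * (x i)^2) := by
  have du : DifferentiableAt ℝ u x := hu.differentiable (by simp) x
  have dpu : DifferentiableAt ℝ (fun y => pd i u y) x :=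
    ((contDiff_pd hu i).differentiable (by simp)).differentiableAt
  have dc : DifferentiableAt ℝ (fun y : EuclideanSpace ℝ (Fin N) => y i) x :=
    (EuclideanSpace.proj (𝕜 := ℝ) i).differentiable.differentiableAt
  have dQ : DifferentiableAt ℝ (fun y : EuclideanSpace ℝ (Fin N) => (‖y‖^2+δ)⁻¹) x :=
    ((contDiff_Q hδ).differentiable (by simp)).differentiableAt
  rw [pd_add (f := fun y => 2 * (u y * pd i u y * (‖y‖^2+δ)⁻¹))
      (g := fun y => 2 * (u y * u y * (y i * ((‖y‖^2+δ)⁻¹ * (‖y‖^2+δ)⁻¹))))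
      (((du.mul dpu).mul dQ).const_mul 2) (((du.mul du).mul (dc.mul (dQ.mul dQ))).const_mul 2) i,
    pd_const_mul (f := fun y => u y * u y * (y i * ((‖y‖^2+δ)⁻¹ * (‖y‖^2+δ)⁻¹)))
      (((du.mul du).mul (dc.mul (dQ.mul dQ)))) 2 i,
    pd_const_mul (f := fun y => u y * pd i u y * (‖y‖^2+δ)⁻¹) ((du.mul dpu).mul dQ) 2 i,
    pd_mul (f := fun y => u y * pd i u y) (g := fun y => (‖y‖^2+δ)⁻¹) (du.mul dpu) dQ i,
    pd_mul du dpu, pd_Q hδ, phi_deriv hu hδ]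
  have : pd i (fun y => pd i u y) x = pd i (pd i u) x := rfl
  rw [this]
  ring

end

section
variable {N : ℕ}

set_option maxHeartbeats 2000000 in
lemma key_delta (hN : 5 ≤ N) {u : EuclideanSpace ℝ (Fin N) → ℝ} (hu : ContDiff ℝ (⊤ : ℕ∞) u)
    (hc : HasCompactSupport u) {δ : ℝ} (hδ : 0 < δ) :
    ((N:ℝ) * ((N:ℝ)-4) / 4)^2 * (∫ x, u x^2 * ((‖x‖^2+δ)⁻¹)^2)
      ≤ ∫ x, (∑ i, pd i (pd i u) x)^2 := by
  have hN4 : (0:ℝ) < (N:ℝ) - 4 := by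
    have : (5:ℝ) ≤ (N:ℝ) := by exact_mod_cast hN
    linarith
  have hNpos : (0:ℝ) < (N:ℝ) := by linarith
  -- continuity facts
  have hQc : Continuous (fun x : EuclideanSpace ℝ (Fin N) => (‖x‖^2+δ)⁻¹) :=
    (contDiff_Q hδ).continuous
  have hQpos : ∀ x : EuclideanSpace ℝ (Fin N), 0 < (‖x‖^2+δ)⁻¹ := Q_pos hδ
  have huc : Continuous u := hu.continuous
  have hpuc : ∀ i, Continuous (fun x => pd i u x) := fun i => (contDiff_pd hu i).continuous
  have hLc : Continuous (fun x => ∑ i, pd i (pd i u) x) :=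
    continuous_finset_sum _ fun i _ => (contDiff_pd (contDiff_pd hu i) i).continuous
  have hXc : Continuous (fun x : EuclideanSpace ℝ (Fin N) => ∑ i, x i * pd i u x) :=
    continuous_finset_sum _ fun i _ =>
      ((EuclideanSpace.proj (𝕜 := ℝ) i).continuous).mul (hpuc i)
  have hcoordc : ∀ i : Fin N, Continuous (fun x : EuclideanSpace ℝ (Fin N) => x i) :=
    fun i => (EuclideanSpace.proj (𝕜 := ℝ) i).continuous
  -- zero facts
  have hLzero : ∀ x, x ∉ tsupport u → (∑ i, pd i (pd i u) x) = 0 := by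
    intro x hx
    refine Finset.sum_eq_zero fun i _ => pd_zero_of (fun h => hx (tsupport_pd u i h)) i
  -- integrability facts
  have iA : Integrable (fun x => u x^2 * ((‖x‖^2+δ)⁻¹)^2) :=
    integrable_aux hc ((huc.pow 2).mul (hQc.pow 2))
      (support_helper fun x hx => by simp [u_zero_of hx])
  have iC : Integrable (fun x => u x^2 * ((‖x‖^2+δ)⁻¹)^3) :=
    integrable_aux hc ((huc.pow 2).mul (hQc.pow 3))
      (support_helper fun x hx => by simp [u_zero_of hx])
  have iB : Integrable (fun x => u x * (∑ i, x i * pd i u x) * ((‖x‖^2+δ)⁻¹)^2) :=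
    integrable_aux hc ((huc.mul hXc).mul (hQc.pow 2))
      (support_helper fun x hx => by simp [u_zero_of hx])
  have iH : Integrable (fun x => (∑ i, (pd i u x)^2) * (‖x‖^2+δ)⁻¹) :=
    integrable_aux hc ((continuous_finset_sum _ fun i _ => (hpuc i).pow 2).mul hQc)
      (support_helper fun x hx => by
        have h0 : (∑ i, (pd i u x)^2) = 0 :=
          Finset.sum_eq_zero fun i _ => by rw [pd_zero_of hx i]; norm_num
        rw [h0, zero_mul])
  have iD : Integrable (fun x => u x * (∑ i, pd i (pd i u) x) * (‖x‖^2+δ)⁻¹) :=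
    integrable_aux hc ((huc.mul hLc).mul hQc)
      (support_helper fun x hx => by simp [u_zero_of hx])
  have iJ : Integrable (fun x => (∑ i, pd i (pd i u) x)^2) :=
    integrable_aux hc (hLc.pow 2)
      (support_helper fun x hx => by simp [hLzero x hx])
  -- identity 1
  have hΦcd : ∀ i : Fin N, ContDiff ℝ (⊤ : ℕ∞)
      (fun y : EuclideanSpace ℝ (Fin N) => u y * u y * (y i * ((‖y‖^2+δ)⁻¹ * (‖y‖^2+δ)⁻¹))) :=
    fun i => (hu.mul hu).mul ((EuclideanSpace.proj (𝕜 := ℝ) i).contDiff.mul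
      ((contDiff_Q hδ).mul (contDiff_Q hδ)))
  have hΦsupp : ∀ i : Fin N, Function.support
      (fun y : EuclideanSpace ℝ (Fin N) => u y * u y * (y i * ((‖y‖^2+δ)⁻¹ * (‖y‖^2+δ)⁻¹)))
        ⊆ tsupport u := fun i => support_helper fun x hx => by simp [u_zero_of hx]
  have hzero1 : ∀ i : Fin N, (∫ x, pd i
      (fun y : EuclideanSpace ℝ (Fin N) => u y * u y * (y i * ((‖y‖^2+δ)⁻¹ * (‖y‖^2+δ)⁻¹))) x)
        = 0 :=
    fun i => integral_pd_eq_zero (hΦcd i) (hc.mono' (hΦsupp i)) i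
  have hint1 : ∀ i : Fin N, Integrable (fun x => pd i
      (fun y : EuclideanSpace ℝ (Fin N) => u y * u y * (y i * ((‖y‖^2+δ)⁻¹ * (‖y‖^2+δ)⁻¹))) x) :=
    fun i => integrable_aux hc (contDiff_pd (hΦcd i) i).continuous
      ((support_pd _ i).trans (closure_minimal (hΦsupp i) (isClosed_tsupport u)))
  have hsum1 : (∫ x, ∑ i, pd i
      (fun y : EuclideanSpace ℝ (Fin N) => u y * u y * (y i * ((‖y‖^2+δ)⁻¹ * (‖y‖^2+δ)⁻¹))) x)
        = 0 := by
    rw [integral_finset_sum _ fun i _ => hint1 i]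
    simp [hzero1]
  have hpt1 : ∀ x : EuclideanSpace ℝ (Fin N), (∑ i, pd i
      (fun y : EuclideanSpace ℝ (Fin N) => u y * u y * (y i * ((‖y‖^2+δ)⁻¹ * (‖y‖^2+δ)⁻¹))) x)
      = 2 * (u x * (∑ i, x i * pd i u x) * ((‖x‖^2+δ)⁻¹)^2)
        + (((N:ℝ)-4) * (u x^2 * ((‖x‖^2+δ)⁻¹)^2) + 4*δ*(u x^2 * ((‖x‖^2+δ)⁻¹)^3)) := by
    intro x
    have hs : (‖x‖^2+δ) ≠ 0 := by positivity
    rw [Finset.sum_congr rfl fun i _ => phi_deriv hu hδ i x]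
    rw [Finset.sum_sub_distrib, Finset.sum_add_distrib, ← Finset.mul_sum, ← Finset.mul_sum,
      ← Finset.mul_sum, Finset.sum_const, Finset.card_univ, Fintype.card_fin, nsmul_eq_mul,
      ← normsq_eq]
    field_simp
    ring
  have id1 : 2 * (∫ x, u x * (∑ i, x i * pd i u x) * ((‖x‖^2+δ)⁻¹)^2)
      + (((N:ℝ)-4) * (∫ x, u x^2 * ((‖x‖^2+δ)⁻¹)^2)
        + 4*δ*(∫ x, u x^2 * ((‖x‖^2+δ)⁻¹)^3)) = 0 := by
    have i2 : Integrable (fun x => ((N:ℝ)-4) * (u x^2 * ((‖x‖^2+δ)⁻¹)^2)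
        + 4*δ*(u x^2 * ((‖x‖^2+δ)⁻¹)^3)) :=
      (iA.const_mul ((N:ℝ)-4)).add (iC.const_mul (4*δ))
    rw [← integral_const_mul, ← integral_const_mul, ← integral_const_mul, ← integral_add
      (iA.const_mul ((N:ℝ)-4)) (iC.const_mul (4*δ)), ← integral_add (iB.const_mul 2) i2]
    rw [← hsum1]
    exact integral_congr_ae (Filter.Eventually.of_forall fun x => (hpt1 x).symm)
  -- identity 2
  have hΨcd : ∀ i : Fin N, ContDiff ℝ (⊤ : ℕ∞)
      (fun y : EuclideanSpace ℝ (Fin N) => 2 * (u y * pd i u y * (‖y‖^2+δ)⁻¹)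
        + 2 * (u y * u y * (y i * ((‖y‖^2+δ)⁻¹ * (‖y‖^2+δ)⁻¹)))) :=
    fun i => (contDiff_const.mul ((hu.mul (contDiff_pd hu i)).mul (contDiff_Q hδ))).add
      (contDiff_const.mul (hΦcd i))
  have hΨsupp : ∀ i : Fin N, Function.support
      (fun y : EuclideanSpace ℝ (Fin N) => 2 * (u y * pd i u y * (‖y‖^2+δ)⁻¹)
        + 2 * (u y * u y * (y i * ((‖y‖^2+δ)⁻¹ * (‖y‖^2+δ)⁻¹)))) ⊆ tsupport u :=
    fun i => support_helper fun x hx => by simp [u_zero_of hx]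
  have hzero2 : ∀ i : Fin N, (∫ x, pd i
      (fun y : EuclideanSpace ℝ (Fin N) => 2 * (u y * pd i u y * (‖y‖^2+δ)⁻¹)
        + 2 * (u y * u y * (y i * ((‖y‖^2+δ)⁻¹ * (‖y‖^2+δ)⁻¹)))) x) = 0 :=
    fun i => integral_pd_eq_zero (hΨcd i) (hc.mono' (hΨsupp i)) i
  have hint2 : ∀ i : Fin N, Integrable (fun x => pd i
      (fun y : EuclideanSpace ℝ (Fin N) => 2 * (u y * pd i u y * (‖y‖^2+δ)⁻¹)
        + 2 * (u y * u y * (y i * ((‖y‖^2+δ)⁻¹ * (‖y‖^2+δ)⁻¹)))) x) :=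
    fun i => integrable_aux hc (contDiff_pd (hΨcd i) i).continuous
      ((support_pd _ i).trans (closure_minimal (hΨsupp i) (isClosed_tsupport u)))
  have hsum2 : (∫ x, ∑ i, pd i
      (fun y : EuclideanSpace ℝ (Fin N) => 2 * (u y * pd i u y * (‖y‖^2+δ)⁻¹)
        + 2 * (u y * u y * (y i * ((‖y‖^2+δ)⁻¹ * (‖y‖^2+δ)⁻¹)))) x) = 0 := by
    rw [integral_finset_sum _ fun i _ => hint2 i]
    simp [hzero2]
  have hpsi : ∀ (i : Fin N) (x : EuclideanSpace ℝ (Fin N)), pd i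
      (fun y : EuclideanSpace ℝ (Fin N) => 2 * (u y * pd i u y * (‖y‖^2+δ)⁻¹)
        + 2 * (u y * u y * (y i * ((‖y‖^2+δ)⁻¹ * (‖y‖^2+δ)⁻¹)))) x
      = (2*(‖x‖^2+δ)⁻¹) * (pd i u x)^2 + (2*u x*(‖x‖^2+δ)⁻¹) * (pd i (pd i u) x)
        + 2*(u x^2 * ((‖x‖^2+δ)⁻¹)^2) - (8*u x^2*((‖x‖^2+δ)⁻¹)^3) * (x i)^2 := by
    intro i x
    rw [psi_deriv hu hδ i x]
    ring
  have hpt2 : ∀ x : EuclideanSpace ℝ (Fin N), (∑ i, pd i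
      (fun y : EuclideanSpace ℝ (Fin N) => 2 * (u y * pd i u y * (‖y‖^2+δ)⁻¹)
        + 2 * (u y * u y * (y i * ((‖y‖^2+δ)⁻¹ * (‖y‖^2+δ)⁻¹)))) x)
      = 2 * ((∑ i, (pd i u x)^2) * (‖x‖^2+δ)⁻¹)
        + 2 * (u x * (∑ i, pd i (pd i u) x) * (‖x‖^2+δ)⁻¹)
        + (2*((N:ℝ)-4) * (u x^2 * ((‖x‖^2+δ)⁻¹)^2) + 8*δ*(u x^2 * ((‖x‖^2+δ)⁻¹)^3)) := by
    intro x
    have hs : (‖x‖^2+δ) ≠ 0 := by positivity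
    rw [Finset.sum_congr rfl fun i _ => hpsi i x]
    simp only [Finset.sum_add_distrib, Finset.sum_sub_distrib, ← Finset.mul_sum,
      Finset.sum_const, Finset.card_univ, Fintype.card_fin, nsmul_eq_mul]
    rw [normsq_eq x] at hs ⊢
    field_simp
    ring
  have id2 : 2 * (∫ x, (∑ i, (pd i u x)^2) * (‖x‖^2+δ)⁻¹)
      + 2 * (∫ x, u x * (∑ i, pd i (pd i u) x) * (‖x‖^2+δ)⁻¹)
      + (2*((N:ℝ)-4) * (∫ x, u x^2 * ((‖x‖^2+δ)⁻¹)^2)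
        + 8*δ*(∫ x, u x^2 * ((‖x‖^2+δ)⁻¹)^3)) = 0 := by
    have i2 : Integrable (fun x => 2*((N:ℝ)-4) * (u x^2 * ((‖x‖^2+δ)⁻¹)^2)
        + 8*δ*(u x^2 * ((‖x‖^2+δ)⁻¹)^3)) :=
      (iA.const_mul (2*((N:ℝ)-4))).add (iC.const_mul (8*δ))
    have i3 : Integrable (fun x => 2 * ((∑ i, (pd i u x)^2) * (‖x‖^2+δ)⁻¹)
        + 2 * (u x * (∑ i, pd i (pd i u) x) * (‖x‖^2+δ)⁻¹)) :=
      (iH.const_mul 2).add (iD.const_mul 2)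
    rw [← integral_const_mul, ← integral_const_mul, ← integral_const_mul, ← integral_const_mul,
      ← integral_add (iA.const_mul (2*((N:ℝ)-4))) (iC.const_mul (8*δ)),
      ← integral_add (iH.const_mul 2) (iD.const_mul 2), ← integral_add i3 i2]
    rw [← hsum2]
    exact integral_congr_ae (Filter.Eventually.of_forall fun x => (hpt2 x).symm)
  -- nonnegativity
  have hA0 : 0 ≤ ∫ x, u x^2 * ((‖x‖^2+δ)⁻¹)^2 :=
    integral_nonneg fun x => by positivity
  have hC0 : 0 ≤ ∫ x, u x^2 * ((‖x‖^2+δ)⁻¹)^3 :=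
    integral_nonneg fun x => by positivity
  have hH0 : 0 ≤ ∫ x, (∑ i, (pd i u x)^2) * (‖x‖^2+δ)⁻¹ :=
    integral_nonneg fun x => mul_nonneg (Finset.sum_nonneg fun i _ => sq_nonneg _) (hQpos x).le
  -- Young 1
  have he1pos : (0:ℝ) < ((N:ℝ)-4)/2 := by positivity
  have young1 : -(2*(((N:ℝ)-4)/2)) * (∫ x, u x * (∑ i, x i * pd i u x) * ((‖x‖^2+δ)⁻¹)^2)
      ≤ (((N:ℝ)-4)/2)^2 * (∫ x, u x^2 * ((‖x‖^2+δ)⁻¹)^2)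
        + (∫ x, (∑ i, (pd i u x)^2) * (‖x‖^2+δ)⁻¹) := by
    rw [← integral_const_mul, ← integral_const_mul]
    have irhs : Integrable (fun x => (((N:ℝ)-4)/2)^2 * (u x^2 * ((‖x‖^2+δ)⁻¹)^2)
        + (∑ i, (pd i u x)^2) * (‖x‖^2+δ)⁻¹) := (iA.const_mul _).add iH
    rw [← integral_add (iA.const_mul ((((N:ℝ)-4)/2)^2)) iH]
    refine integral_mono (iB.const_mul (-(2*(((N:ℝ)-4)/2)))) irhs fun x => ?_
    have hcs := Finset.sum_mul_sq_le_sq_mul_sq Finset.univ (fun i => x i) (fun i => pd i u x)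
    have hQp := hQpos x
    have hSQ : ‖x‖^2 * (‖x‖^2+δ)⁻¹ ≤ 1 := by
      rw [← mul_inv_cancel₀ (show (‖x‖^2+δ) ≠ 0 by positivity)]
      have : (0:ℝ) ≤ (‖x‖^2+δ)⁻¹ := hQp.le
      nlinarith [hδ]
    have hHd0 : (0:ℝ) ≤ ∑ i, (pd i u x)^2 := Finset.sum_nonneg fun i _ => sq_nonneg _
    have hchain : (∑ i, x i * pd i u x)^2 * ((‖x‖^2+δ)⁻¹)^2
        ≤ (∑ i, (pd i u x)^2) * (‖x‖^2+δ)⁻¹ := by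
      have h1 : (∑ i, x i * pd i u x)^2 ≤ ‖x‖^2 * (∑ i, (pd i u x)^2) := by
        rw [normsq_eq]; exact hcs
      calc (∑ i, x i * pd i u x)^2 * ((‖x‖^2+δ)⁻¹)^2
          ≤ (‖x‖^2 * (∑ i, (pd i u x)^2)) * ((‖x‖^2+δ)⁻¹)^2 :=
            mul_le_mul_of_nonneg_right h1 (by positivity)
        _ = (‖x‖^2 * (‖x‖^2+δ)⁻¹) * ((∑ i, (pd i u x)^2) * (‖x‖^2+δ)⁻¹) := by ring
        _ ≤ 1 * ((∑ i, (pd i u x)^2) * (‖x‖^2+δ)⁻¹) :=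
            mul_le_mul_of_nonneg_right hSQ (by positivity)
        _ = (∑ i, (pd i u x)^2) * (‖x‖^2+δ)⁻¹ := one_mul _
    nlinarith [sq_nonneg ((((N:ℝ)-4)/2) * u x * (‖x‖^2+δ)⁻¹ + (∑ i, x i * pd i u x) * (‖x‖^2+δ)⁻¹)]
  -- Young 2
  have he2pos : (0:ℝ) < (N:ℝ)*((N:ℝ)-4)/4 := by positivity
  have young2 : -(2*((N:ℝ)*((N:ℝ)-4)/4)) * (∫ x, u x * (∑ i, pd i (pd i u) x) * (‖x‖^2+δ)⁻¹)
      ≤ ((N:ℝ)*((N:ℝ)-4)/4)^2 * (∫ x, u x^2 * ((‖x‖^2+δ)⁻¹)^2) + (∫ x, (∑ i, pd i (pd i u) x)^2) := by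
    rw [← integral_const_mul, ← integral_const_mul]
    have irhs : Integrable (fun x => ((N:ℝ)*((N:ℝ)-4)/4)^2 * (u x^2 * ((‖x‖^2+δ)⁻¹)^2)
        + (∑ i, pd i (pd i u) x)^2) := (iA.const_mul _).add iJ
    rw [← integral_add (iA.const_mul (((N:ℝ)*((N:ℝ)-4)/4)^2)) iJ]
    refine integral_mono (iD.const_mul (-(2*((N:ℝ)*((N:ℝ)-4)/4)))) irhs fun x => ?_
    nlinarith [sq_nonneg (((N:ℝ)*((N:ℝ)-4)/4) * u x * (‖x‖^2+δ)⁻¹ + (∑ i, pd i (pd i u) x))]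
  -- combine
  have hHardy : ((N:ℝ)-4)^2/4 * (∫ x, u x^2 * ((‖x‖^2+δ)⁻¹)^2)
      ≤ ∫ x, (∑ i, (pd i u x)^2) * (‖x‖^2+δ)⁻¹ := by
    nlinarith [mul_nonneg (mul_nonneg hδ.le hC0) he1pos.le, hδ.le, hC0]
  nlinarith [hHardy, young2, id2, mul_nonneg hδ.le hC0, he2pos.le, hA0,
    mul_le_mul_of_nonneg_left hHardy (by positivity : (0:ℝ) ≤ 2*((N:ℝ)*((N:ℝ)-4)/4))]
end

section
variable {N : ℕ}

lemma rellich (hN : 5 ≤ N) {u : EuclideanSpace ℝ (Fin N) → ℝ} (hu : ContDiff ℝ (⊤ : ℕ∞) u)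
    (hc : HasCompactSupport u) :
    Integrable (fun x : EuclideanSpace ℝ (Fin N) => u x^2 / ‖x‖^4) ∧
      ((N:ℝ) * ((N:ℝ)-4) / 4)^2 * (∫ x, u x^2 / ‖x‖^4)
        ≤ ∫ x, (∑ i, pd i (pd i u) x)^2 := by
  have hN4 : (0:ℝ) < (N:ℝ) - 4 := by
    have : (5:ℝ) ≤ (N:ℝ) := by exact_mod_cast hN
    linarith
  have hNpos : (0:ℝ) < (N:ℝ) := by linarith
  set β : ℝ := ((N:ℝ) * ((N:ℝ)-4) / 4)^2 with hβ
  have hβpos : 0 < β := by positivity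
  set J : ℝ := ∫ x, (∑ i, pd i (pd i u) x)^2 with hJ
  have hJ0 : 0 ≤ J := integral_nonneg fun x => sq_nonneg _
  have huc : Continuous u := hu.continuous
  -- nontrivial space, a.e. nonzero
  haveI : Nonempty (Fin N) := ⟨⟨0, by omega⟩⟩
  haveI : Nontrivial (EuclideanSpace ℝ (Fin N)) := by
    refine ⟨0, EuclideanSpace.single ⟨0, by omega⟩ 1, fun h => ?_⟩
    have : (EuclideanSpace.single ⟨0, by omega⟩ (1:ℝ) : EuclideanSpace ℝ (Fin N)) ⟨0, by omega⟩
        = (0 : EuclideanSpace ℝ (Fin N)) ⟨0, by omega⟩ := by rw [h]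
    rw [EuclideanSpace.single_apply] at this
    simp at this
  have hae : ∀ᵐ x : EuclideanSpace ℝ (Fin N), x ≠ 0 := by
    have : volume ({0} : Set (EuclideanSpace ℝ (Fin N))) = 0 := measure_singleton 0
    rw [ae_iff]
    simpa [Set.setOf_eq_eq_singleton'] using this
  -- sequence
  set gn : ℕ → EuclideanSpace ℝ (Fin N) → ℝ :=
    fun n x => u x^2 * ((‖x‖^2 + 1/(n+1))⁻¹)^2 with hgn
  set g : EuclideanSpace ℝ (Fin N) → ℝ := fun x => u x^2 / ‖x‖^4 with hg
  have hδn : ∀ n : ℕ, (0:ℝ) < 1/(n+1) := fun n => by positivity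
  have hgn_int : ∀ n, Integrable (gn n) := fun n =>
    integrable_aux hc ((huc.pow 2).mul ((contDiff_Q (hδn n)).continuous.pow 2))
      (support_helper fun x hx => by simp [hgn, u_zero_of hx])
  have hgn_nonneg : ∀ n x, 0 ≤ gn n x := fun n x => by
    have := Q_pos (hδn n) x
    positivity
  have hg_nonneg : ∀ x, 0 ≤ g x := fun x => by positivity
  have hkey : ∀ n : ℕ, ∫ x, gn n x ≤ J / β := by
    intro n
    have h2 := key_delta hN hu hc (hδn n)
    rw [le_div_iff₀ hβpos]
    simp only [hgn, hβ, hJ]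
    nlinarith [h2]
  -- monotone
  have hmono : ∀ x, Monotone fun n => gn n x := by
    intro x
    intro m n hmn
    have h1 : (0:ℝ) < ‖x‖^2 + 1/(m+1) := by positivity
    have h2 : ‖x‖^2 + 1/(n+1) ≤ ‖x‖^2 + 1/(m+1) := by
      have : (1:ℝ)/(n+1) ≤ 1/(m+1) := by
        apply one_div_le_one_div_of_le (by positivity)
        exact_mod_cast Nat.add_le_add_right hmn 1
      linarith
    have h3 : (‖x‖^2 + 1/(m+1))⁻¹ ≤ (‖x‖^2 + 1/(n+1))⁻¹ :=
      inv_anti₀ (by positivity) h2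
    have h4 : ((‖x‖^2 + 1/(m+1))⁻¹)^2 ≤ ((‖x‖^2 + 1/(n+1))⁻¹)^2 := by
      apply pow_le_pow_left₀ (by positivity) h3
    exact mul_le_mul_of_nonneg_left h4 (sq_nonneg _)
  -- tendsto at x ≠ 0
  have htend : ∀ x : EuclideanSpace ℝ (Fin N), x ≠ 0 →
      Filter.Tendsto (fun n => gn n x) Filter.atTop (nhds (g x)) := by
    intro x hx
    have hn0 : ‖x‖ ≠ 0 := norm_ne_zero_iff.mpr hx
    have h1 : Filter.Tendsto (fun n : ℕ => ‖x‖^2 + 1/(n+1)) Filter.atTop (nhds (‖x‖^2)) := by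
      have := tendsto_one_div_add_atTop_nhds_zero_nat (𝕜 := ℝ)
      have h := this.const_add (‖x‖^2)
      simpa using h
    have h2 : Filter.Tendsto (fun n : ℕ => ((‖x‖^2 + 1/(n+1))⁻¹)^2) Filter.atTop
        (nhds (((‖x‖^2)⁻¹)^2)) := ((h1.inv₀ (by positivity)).pow 2)
    have h3 := h2.const_mul (u x^2)
    have : u x^2 * ((‖x‖^2)⁻¹)^2 = g x := by
      simp only [hg]
      rw [div_eq_mul_inv, ← inv_pow, ← pow_mul, inv_pow]
    rw [this] at h3
    exact h3
  have hgnm : ∀ n, Measurable (gn n) := fun n =>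
    ((huc.pow 2).mul ((contDiff_Q (hδn n)).continuous.pow 2)).measurable
  have hgm : Measurable g := ((huc.pow 2).measurable).div ((continuous_norm.pow 4).measurable)
  have hsup : ∀ᵐ x : EuclideanSpace ℝ (Fin N),
      (⨆ n, ENNReal.ofReal (gn n x)) = ENNReal.ofReal (g x) := by
    filter_upwards [hae] with x hx
    have h1 : Filter.Tendsto (fun n => ENNReal.ofReal (gn n x)) Filter.atTop
        (nhds (ENNReal.ofReal (g x))) :=
      (ENNReal.continuous_ofReal.tendsto _).comp (htend x hx)
    have h2 : Monotone (fun n => ENNReal.ofReal (gn n x)) :=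
      fun m n h => ENNReal.ofReal_le_ofReal (hmono x h)
    exact tendsto_nhds_unique (tendsto_atTop_iSup h2) h1
  have hlin : (∫⁻ x, ENNReal.ofReal (g x)) = ⨆ n, ∫⁻ x, ENNReal.ofReal (gn n x) := by
    rw [← lintegral_iSup' (fun n => ((hgnm n).ennreal_ofReal).aemeasurable)
      (Filter.Eventually.of_forall fun x => fun m n h => ENNReal.ofReal_le_ofReal (hmono x h))]
    exact lintegral_congr_ae (hsup.mono fun x h => h.symm)
  have hboundn : ∀ n, (∫⁻ x, ENNReal.ofReal (gn n x)) ≤ ENNReal.ofReal (J/β) := by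
    intro n
    rw [← ofReal_integral_eq_lintegral_ofReal (hgn_int n)
      (Filter.Eventually.of_forall (hgn_nonneg n))]
    exact ENNReal.ofReal_le_ofReal (hkey n)
  have hfin : (∫⁻ x, ENNReal.ofReal (g x)) ≤ ENNReal.ofReal (J/β) := by
    rw [hlin]; exact iSup_le hboundn
  have hInt : Integrable g := by
    refine ⟨hgm.aestronglyMeasurable, ?_⟩
    show (∫⁻ x, ‖g x‖ₑ) < ⊤
    have heq : (∫⁻ x, ‖g x‖ₑ) = ∫⁻ x, ENNReal.ofReal (g x) :=
      lintegral_congr fun x => Real.enorm_eq_ofReal (hg_nonneg x)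
    rw [heq]
    exact lt_of_le_of_lt hfin ENNReal.ofReal_lt_top
  have hIle : ∫ x, g x ≤ J / β := by
    rw [integral_eq_lintegral_of_nonneg_ae (Filter.Eventually.of_forall hg_nonneg)
      hgm.aestronglyMeasurable]
    calc (∫⁻ x, ENNReal.ofReal (g x)).toReal
        ≤ (ENNReal.ofReal (J/β)).toReal := ENNReal.toReal_mono ENNReal.ofReal_ne_top hfin
      _ = J / β := ENNReal.toReal_ofReal (div_nonneg hJ0 hβpos.le)
  refine ⟨hInt, ?_⟩
  rw [← le_div_iff₀' hβpos]
  exact hIle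
end

/-- if `N ≥ 5`, `Ω ⊆ B_R(0)` is open and `0 ≤ α < N(N−4)/4`, then there is
`γ > 0` such that for every smooth `u` with compact support contained in `Ω`,
`∫_Ω (|Δu|² − α²|x|⁻⁴u²) ≥ γ ∫_Ω u²`. -/
theorem stmt9 (N : ℕ) (hN : 5 ≤ N) (R : ℝ) (hR : 0 < R)
    (Ω : Set (EuclideanSpace ℝ (Fin N)))
    (hΩ_open : IsOpen Ω) (hΩ_ball : Ω ⊆ Metric.ball (0 : EuclideanSpace ℝ (Fin N)) R)
    (α : ℝ) (hα_nonneg : 0 ≤ α) (hα : α < (N : ℝ) * ((N : ℝ) - 4) / 4) :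
    ∃ γ : ℝ, 0 < γ ∧
      ∀ u : EuclideanSpace ℝ (Fin N) → ℝ,
        ContDiff ℝ (⊤ : ℕ∞) u → HasCompactSupport u → tsupport u ⊆ Ω →
          γ * ∫ x in Ω, (u x) ^ 2 ≤
            ∫ x in Ω, ((laplacian u x) ^ 2 - α ^ 2 * (u x) ^ 2 / ‖x‖ ^ 4) := by
  have hN4 : (0:ℝ) < (N:ℝ) - 4 := by
    have : (5:ℝ) ≤ (N:ℝ) := by exact_mod_cast hN
    linarith
  have hNpos : (0:ℝ) < (N:ℝ) := by linarith
  have hβα : α^2 < ((N:ℝ)*((N:ℝ)-4)/4)^2 := by nlinarith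
  refine ⟨(((N:ℝ)*((N:ℝ)-4)/4)^2 - α^2)/R^4, div_pos (by linarith) (by positivity), ?_⟩
  intro u hu hc hsupp
  obtain ⟨hInt, hRel⟩ := rellich hN hu hc
  have huc : Continuous u := hu.continuous
  have hu0 : ∀ x, x ∉ Ω → u x = 0 := fun x hx =>
    u_zero_of (fun h => hx (hsupp h))
  have hL0 : ∀ x, x ∉ Ω → (∑ i, pd i (pd i u) x) = 0 := fun x hx =>
    Finset.sum_eq_zero fun i _ => pd_zero_of (fun h => hx (hsupp (tsupport_pd u i h))) i
  have hlap : ∀ x, laplacian u x = ∑ i, pd i (pd i u) x := fun x => rfl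
  -- a.e. nonzero
  haveI : Nonempty (Fin N) := ⟨⟨0, by omega⟩⟩
  haveI : Nontrivial (EuclideanSpace ℝ (Fin N)) := by
    refine ⟨0, EuclideanSpace.single ⟨0, by omega⟩ 1, fun h => ?_⟩
    have : (EuclideanSpace.single ⟨0, by omega⟩ (1:ℝ) : EuclideanSpace ℝ (Fin N)) ⟨0, by omega⟩
        = (0 : EuclideanSpace ℝ (Fin N)) ⟨0, by omega⟩ := by rw [h]
    rw [EuclideanSpace.single_apply] at this
    simp at this
  have hae : ∀ᵐ x : EuclideanSpace ℝ (Fin N), x ≠ 0 := by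
    have : volume ({0} : Set (EuclideanSpace ℝ (Fin N))) = 0 := measure_singleton 0
    rw [ae_iff]
    simpa [Set.setOf_eq_eq_singleton'] using this
  -- integrability
  have hLc : Continuous (fun x => ∑ i, pd i (pd i u) x) :=
    continuous_finset_sum _ fun i _ => (contDiff_pd (contDiff_pd hu i) i).continuous
  have hLsupp : ∀ x, x ∉ tsupport u → (∑ i, pd i (pd i u) x) = 0 := fun x hx =>
    Finset.sum_eq_zero fun i _ => pd_zero_of (fun h => hx (tsupport_pd u i h)) i
  have iJ : Integrable (fun x => (∑ i, pd i (pd i u) x)^2) :=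
    integrable_aux hc (hLc.pow 2) (support_helper fun x hx => by simp [hLsupp x hx])
  have iU2 : Integrable (fun x => (u x)^2) :=
    integrable_aux hc (huc.pow 2) (support_helper fun x hx => by simp [u_zero_of hx])
  have iG : Integrable (fun x => α^2 * (u x)^2 / ‖x‖^4) := by
    have heq : (fun x : EuclideanSpace ℝ (Fin N) => α^2 * (u x)^2 / ‖x‖^4)
        = fun x => α^2 * ((u x)^2 / ‖x‖^4) := by
      funext x
      ring
    rw [heq]
    exact hInt.const_mul _
  -- set integrals over Ω equal global ones
  have e1 : (∫ x in Ω, (u x)^2) = ∫ x, (u x)^2 :=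
    setIntegral_eq_integral_of_forall_compl_eq_zero fun x hx => by simp [hu0 x hx]
  have e2 : (∫ x in Ω, ((laplacian u x)^2 - α^2 * (u x)^2 / ‖x‖^4))
      = ∫ x, ((∑ i, pd i (pd i u) x)^2 - α^2 * (u x)^2 / ‖x‖^4) := by
    have hfe : (fun x => (laplacian u x)^2 - α^2 * (u x)^2 / ‖x‖^4)
        = fun x => (∑ i, pd i (pd i u) x)^2 - α^2 * (u x)^2 / ‖x‖^4 := by
      funext x
      rw [hlap]
    rw [hfe]
    exact setIntegral_eq_integral_of_forall_compl_eq_zero fun x hx => by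
      simp [hL0 x hx, hu0 x hx]
  have hsplit : (∫ x, ((∑ i, pd i (pd i u) x)^2 - α^2 * (u x)^2 / ‖x‖^4))
      = (∫ x, (∑ i, pd i (pd i u) x)^2) - α^2 * (∫ x, (u x)^2 / ‖x‖^4) := by
    rw [integral_sub iJ iG, ← integral_const_mul]
    congr 1
    apply integral_congr_ae
    filter_upwards with x
    ring
  -- lower bound for the Hardy-type integral
  have hI2 : (∫ x, (u x)^2) / R^4 ≤ ∫ x, (u x)^2 / ‖x‖^4 := by
    rw [← integral_div]
    refine integral_mono_ae (iU2.div_const _) hInt ?_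
    filter_upwards [hae] with x hx
    by_cases hux : u x = 0
    · simp [hux]
    · have hxΩ : x ∈ Ω := hsupp (subset_closure (Function.mem_support.mpr hux))
      have hxR : ‖x‖ < R := by
        have := hΩ_ball hxΩ
        rwa [Metric.mem_ball, dist_zero_right] at this
      have h1 : (0:ℝ) < ‖x‖^4 := pow_pos (norm_pos_iff.mpr hx) 4
      have h2 : ‖x‖^4 ≤ R^4 := pow_le_pow_left₀ (norm_nonneg x) hxR.le 4
      gcongr
  have hI0 : 0 ≤ ∫ x, (u x)^2 / ‖x‖^4 :=
    integral_nonneg fun x => by positivity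
  have hU0 : 0 ≤ ∫ x, (u x)^2 := integral_nonneg fun x => sq_nonneg _
  rw [e1, e2, hsplit]
  have h5 : (((N:ℝ)*((N:ℝ)-4)/4)^2 - α^2) * ((∫ x, (u x)^2) / R^4)
      ≤ (((N:ℝ)*((N:ℝ)-4)/4)^2 - α^2) * (∫ x, (u x)^2 / ‖x‖^4) :=
    mul_le_mul_of_nonneg_left hI2 (by linarith)
  have hLHS : ((((N:ℝ)*((N:ℝ)-4)/4)^2 - α^2)/R^4) * (∫ x, (u x)^2)
      = (((N:ℝ)*((N:ℝ)-4)/4)^2 - α^2) * ((∫ x, (u x)^2) / R^4) := by ring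
  rw [hLHS]
  nlinarith [hRel, h5, hI0]
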